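/- For every μ > 0 there exist constants c ≥ 1 and N ≥ 2 such that for every integer n with |n| ≥ N, (1/c) e^{μ|n| log|n| − c|n|} ≤ ∫_ℝ e^{nβ − (2/e) cosh(β/μ)} dβ ≤ c e^{μ|n| log|n| + c|n|}; in other words, the growth in n of the weight ∫_ℝ e^{nβ − (2/e) cosh(β/μ)} dβ is given by e^{μ|n| log|n|} up to factors of exponential order |n|. -/

import Mathlib

/-!
By the Fenchel–Young inequality `u v - eᵛ ≤ u log u - u` for the exponential, applied with
`u = e μ (|a| + 1)` and `v = |β| / μ`, the exponent `a β - (2/e) cosh (β/μ)` is at most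
`μ (|a| + 1) log (μ (|a| + 1)) - |β|`, so the weight is at most twice the exponential of
`μ (|a| + 1) log (μ (|a| + 1)) = μ a log a + O(a)`. Conversely, on the unit interval
`[μ log a, μ log a + 1]` near the maximum of the exponent one has `a β ≥ μ a log a` and
`cosh (β/μ) ≤ e^{1/μ} a`, which gives the lower bound for `a ≥ 1`. The weight is even in `a`.
-/

open MeasureTheory Real Set

noncomputable def besselWeight (μ a : ℝ) : ℝ :=
  ∫ β : ℝ, exp (a * β - 2 / exp 1 * cosh (β / μ))

lemma mul_sub_exp_le_mul_log_sub {u : ℝ} (hu : 0 < u) (v : ℝ) :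
    u * v - exp v ≤ u * log u - u := by
  have h := add_one_le_exp (v - log u)
  rw [exp_sub, exp_log hu, le_div_iff₀ hu] at h
  linarith

lemma integral_exp_neg_abs : ∫ x : ℝ, exp (-|x|) = 2 := by
  rw [integral_comp_abs (f := fun x => exp (-x)), integral_exp_neg_Ioi_zero, mul_one]

lemma integrable_exp_neg_abs : Integrable fun x : ℝ => exp (-|x|) :=
  Integrable.of_integral_ne_zero (by rw [integral_exp_neg_abs]; norm_num)

lemma exp_mul_sub_cosh_le {μ : ℝ} (hμ : 0 < μ) (a β : ℝ) :
    exp (a * β - 2 / exp 1 * cosh (β / μ)) ≤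
      exp (μ * (|a| + 1) * log (μ * (|a| + 1))) * exp (-|β|) := by
  rw [← exp_add, exp_le_exp]
  set s := |a| + 1
  have young := mul_sub_exp_le_mul_log_sub (u := exp 1 * (μ * s)) (by positivity) (|β| / μ)
  rw [log_mul (exp_ne_zero 1) (by positivity), log_exp,
    show exp 1 * (μ * s) * (|β| / μ) = exp 1 * (s * |β|) by field_simp] at young
  have h_young : s * |β| - μ * s * log (μ * s) ≤ exp (|β| / μ) / exp 1 := by
    rw [le_div_iff₀ (exp_pos 1)]
    linarith
  have h_cosh : exp (|β| / μ) / exp 1 ≤ 2 / exp 1 * cosh (β / μ) := by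
    rw [div_mul_eq_mul_div, show |β| / μ = |β / μ| by rw [abs_div, abs_of_pos hμ]]
    gcongr
    rw [cosh_eq]
    linarith [exp_abs_le (β / μ)]
  have h_lin : a * β ≤ |a| * |β| := abs_mul a β ▸ le_abs_self _
  linarith

lemma integrable_exp_mul_sub_cosh {μ : ℝ} (hμ : 0 < μ) (a : ℝ) :
    Integrable fun β : ℝ => exp (a * β - 2 / exp 1 * cosh (β / μ)) :=
  (integrable_exp_neg_abs.const_mul _).mono' (by fun_prop) <| ae_of_all _ fun β => by
    rw [norm_of_nonneg (exp_nonneg _)]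
    exact exp_mul_sub_cosh_le hμ a β

lemma besselWeight_le {μ : ℝ} (hμ : 0 < μ) (a : ℝ) :
    besselWeight μ a ≤ 2 * exp (μ * (|a| + 1) * log (μ * (|a| + 1))) := calc
  besselWeight μ a ≤ ∫ β : ℝ, exp (μ * (|a| + 1) * log (μ * (|a| + 1))) * exp (-|β|) :=
    integral_mono (integrable_exp_mul_sub_cosh hμ a) (integrable_exp_neg_abs.const_mul _)
      (exp_mul_sub_cosh_le hμ a)
  _ = 2 * exp (μ * (|a| + 1) * log (μ * (|a| + 1))) := by
    rw [integral_const_mul, integral_exp_neg_abs, mul_comm]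

lemma mul_log_mul_add_one_le {μ a : ℝ} (hμ : 0 < μ) (ha : 2 ≤ a) :
    μ * (a + 1) * log (μ * (a + 1)) ≤
      μ * a * log a + μ * (1 + 2 * |log (2 * μ)|) * a := by
  have h_log : log (μ * (a + 1)) ≤ log a + |log (2 * μ)| := calc
    log (μ * (a + 1)) ≤ log (2 * μ * a) := log_le_log (by positivity) (by nlinarith)
    _ = log a + log (2 * μ) := by rw [log_mul (by positivity) (by positivity), add_comm]
    _ ≤ log a + |log (2 * μ)| := by gcongr; exact le_abs_self _
  have h_log_le : log a ≤ a := log_le_self (by positivity)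
  calc μ * (a + 1) * log (μ * (a + 1)) ≤ μ * (a + 1) * (log a + |log (2 * μ)|) := by
        gcongr
    _ ≤ μ * a * log a + μ * (1 + 2 * |log (2 * μ)|) * a := by
        nlinarith [mul_le_mul_of_nonneg_left h_log_le hμ.le,
          mul_nonneg (mul_nonneg hμ.le (abs_nonneg (log (2 * μ)))) (by linarith : 0 ≤ a - 1)]

lemma exp_le_besselWeight {μ a : ℝ} (hμ : 0 < μ) (ha : 1 ≤ a) :
    exp (μ * a * log a - 2 / exp 1 * exp (1 / μ) * a) ≤ besselWeight μ a := by
  have ha₀ : 0 < a := by positivity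
  set β₀ := μ * log a
  have h_pointwise : ∀ β ∈ Ioc β₀ (β₀ + 1),
      exp (μ * a * log a - 2 / exp 1 * exp (1 / μ) * a) ≤
        exp (a * β - 2 / exp 1 * cosh (β / μ)) := by
    rintro β ⟨hβ₀, hβ₁⟩
    have h_cosh : cosh (β / μ) ≤ exp (1 / μ) * a := calc
      cosh (β / μ) ≤ exp (β / μ) := by
        rw [cosh_eq]
        have : 0 ≤ β / μ := div_nonneg ((mul_nonneg hμ.le (log_nonneg ha)).trans hβ₀.le) hμ.le
        linarith [exp_le_exp.2 (show -(β / μ) ≤ β / μ by linarith)]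
      _ ≤ exp ((β₀ + 1) / μ) := by gcongr
      _ = exp (1 / μ) * a := by
        rw [add_div, mul_div_cancel_left₀ _ hμ.ne', exp_add, exp_log ha₀, mul_comm]
    have h_lin : μ * a * log a ≤ a * β := calc
      μ * a * log a = a * β₀ := by ring
      _ ≤ a * β := by gcongr
    rw [exp_le_exp]
    linarith [mul_le_mul_of_nonneg_left h_cosh (by positivity : (0 : ℝ) ≤ 2 / exp 1)]
  have h_int := integrable_exp_mul_sub_cosh hμ a
  calc exp (μ * a * log a - 2 / exp 1 * exp (1 / μ) * a)
      ≤ ∫ β in Ioc β₀ (β₀ + 1), exp (a * β - 2 / exp 1 * cosh (β / μ)) := by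
        simpa using setIntegral_ge_of_const_le_real measurableSet_Ioc (by simp) h_pointwise
          h_int.integrableOn
    _ ≤ besselWeight μ a :=
        setIntegral_le_integral h_int (ae_of_all _ fun β => exp_nonneg _)

lemma besselWeight_abs (μ a : ℝ) : besselWeight μ |a| = besselWeight μ a := by
  rcases abs_choice a with h | h
  · rw [h]
  · rw [h, besselWeight, besselWeight, ← integral_neg_eq_self]
    simp only [neg_div, cosh_neg, neg_mul_neg]

theorem bessel_weight_growth (μ : ℝ) (hμ : 0 < μ) :
    ∃ c : ℝ, 1 ≤ c ∧ ∃ N : ℕ, 2 ≤ N ∧ ∀ n : ℤ, (N : ℝ) ≤ |(n : ℝ)| →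
      (1 / c) * Real.exp (μ * |(n : ℝ)| * Real.log |(n : ℝ)| - c * |(n : ℝ)|) ≤
          (∫ β : ℝ, Real.exp ((n : ℝ) * β - (2 / Real.exp 1) * Real.cosh (β / μ))) ∧
        (∫ β : ℝ, Real.exp ((n : ℝ) * β - (2 / Real.exp 1) * Real.cosh (β / μ))) ≤
          c * Real.exp (μ * |(n : ℝ)| * Real.log |(n : ℝ)| + c * |(n : ℝ)|) := by
  set K := 2 / exp 1 * exp (1 / μ)
  set C := μ * (1 + 2 * |log (2 * μ)|)
  have hK : 0 ≤ K := by positivity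
  have hC : 0 ≤ C := by positivity
  refine ⟨2 + C + K, by linarith, 2, le_rfl, fun n hn => ?_⟩
  set a := |(n : ℝ)|
  have ha : 2 ≤ a := by exact_mod_cast hn
  rw [← besselWeight]
  constructor
  · calc 1 / (2 + C + K) * exp (μ * a * log a - (2 + C + K) * a)
        ≤ exp (μ * a * log a - (2 + C + K) * a) := by
          rw [one_div_mul_eq_div]; exact div_le_self (exp_nonneg _) (by linarith)
      _ ≤ exp (μ * a * log a - K * a) := by gcongr; linarith
      _ ≤ besselWeight μ a := exp_le_besselWeight hμ (by linarith)
      _ = besselWeight μ n := besselWeight_abs μ n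
  · calc besselWeight μ n ≤ 2 * exp (μ * (a + 1) * log (μ * (a + 1))) := besselWeight_le hμ n
      _ ≤ 2 * exp (μ * a * log a + C * a) := by gcongr; exact mul_log_mul_add_one_le hμ ha
      _ ≤ (2 + C + K) * exp (μ * a * log a + (2 + C + K) * a) := by gcongr <;> linarith
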